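/- Whp the Phase-1 process applied to the random formula Φ satisfies max_{0≤t≤T} |𝒰_t| ≤ (1+ε/3)·ω·n. -/

import Mathlib

open Finset MeasureTheory Filter
open scoped ENNReal

attribute [local instance] Classical.propDecidable

namespace RandomKSAT

/-- A literal over `n` variables: a pair (variable, sign), `true` = positive occurrence. -/
abbrev Lit (n : ℕ) := Fin n × Bool

/-- A `k`-SAT formula with `n` variables and `m` (ordered) clauses, each an ordered
`k`-tuple of literals. -/
abbrev Formula (n m k : ℕ) := Fin m → Fin k → Lit n

instance formulaMS (n m k : ℕ) : MeasurableSpace (Formula n m k) := ⊤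

/-- The probability of an event under the uniform distribution on `Ω_k(n,m)`. -/
noncomputable def Pr (n m k : ℕ) (A : Set (Formula n m k)) : ℝ :=
  ((Finset.univ.filter (fun Φ : Formula n m k => Φ ∈ A)).card : ℝ) /
    ((Finset.univ : Finset (Formula n m k)).card : ℝ)

/-- Expectation of a random variable with respect to the uniform distribution. -/
noncomputable def EV (n m k : ℕ) (f : Formula n m k → ℝ) : ℝ :=
  (∑ Φ : Formula n m k, f Φ) / (Fintype.card (Formula n m k) : ℝ)

/-- The uniform probability measure on `Ω_k(n,m)`. -/
noncomputable def unif (n m k : ℕ) : Measure (Formula n m k) :=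
  ((Fintype.card (Formula n m k) : ℝ≥0∞))⁻¹ • Measure.count

variable {n m k : ℕ}

/-- A literal is true under an assignment. -/
def litTrue (σ : Fin n → Bool) (l : Lit n) : Prop := σ l.1 = l.2

/-- An assignment satisfies a formula if every clause contains a true literal. -/
def sat (σ : Fin n → Bool) (Φ : Formula n m k) : Prop := ∀ i, ∃ j, litTrue σ (Φ i j)

/-- The assignment `σ_Z`: variables in `Z` are false, all others true. -/
noncomputable def sigmaZ (Z : Finset (Fin n)) : Fin n → Bool :=
  fun x => if x ∈ Z then false else true

/-- Number of positive literals of clause `i`. -/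
noncomputable def posCount (Φ : Formula n m k) (i : Fin m) : ℕ :=
  (Finset.univ.filter (fun j => (Φ i j).2 = true)).card

/-- Clause `i` is all-negative. -/
def allNeg (Φ : Formula n m k) (i : Fin m) : Prop := ∀ j, (Φ i j).2 = false

/-- The set of indices of `Z`-unique clauses: exactly one positive literal with variable
outside `Z`, and no negative literal with variable in `Z`. -/
noncomputable def Uset (Φ : Formula n m k) (Z : Finset (Fin n)) : Finset (Fin m) :=
  Finset.univ.filter (fun i =>
    (Finset.univ.filter (fun j => (Φ i j).2 = true ∧ (Φ i j).1 ∉ Z)).card = 1 ∧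
    ∀ j, (Φ i j).2 = false → (Φ i j).1 ∉ Z)

/-- `U_t(x)`: the number of `Z`-unique clauses in which `x` occurs positively. -/
noncomputable def Ux (Φ : Formula n m k) (Z : Finset (Fin n)) (x : Fin n) : ℕ :=
  ((Uset Φ Z).filter (fun i => ∃ j, Φ i j = (x, true))).card

/-- `k₁ = ⌈k/2⌉`. -/
def k1 (k : ℕ) : ℕ := (k + 1) / 2

/-- The map `π₀`: `Sum.inl b` records only the sign `b` of a literal, `Sum.inr l`
records the literal `l` itself (revealed). -/
noncomputable def pi0 (Φ : Formula n m k) (i : Fin m) (j : Fin k) : Bool ⊕ Lit n :=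
  if i ∈ Uset Φ ∅ ∧ (Φ i j).2 = true then Sum.inr (Φ i j) else Sum.inl (Φ i j).2

/-- State of the Phase-1 process: the set `Z_t`, the map `π_t`, the clause `φ_t`
and variable `z_t` chosen at the last step (if any), and whether the process stopped. -/
structure P1State (n m k : ℕ) where
  Z : Finset (Fin n)
  pi : Fin m → Fin k → Bool ⊕ Lit n
  lastPhi : Option (Fin m)
  lastZ : Option (Fin n)
  stopped : Bool

/-- One step (PI1--PI4) of the Phase-1 process. -/
noncomputable def p1step (Φ : Formula n m k) (s : P1State n m k) : P1State n m k :=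
  if s.stopped then s else
  let E := Finset.univ.filter (fun i : Fin m => allNeg Φ i ∧ ∀ j, (Φ i j).1 ∉ s.Z)
  if hE : E.Nonempty then
    if hk : 0 < k then
      let φt := E.min' hE
      let J := Finset.univ.filter
        (fun j : Fin k => j.val + 1 < k1 k ∧ Ux Φ s.Z ((Φ φt j).1) = 0)
      let jsel : Fin k :=
        if hJ : J.Nonempty then J.min' hJ
        else ⟨min (k1 k - 1) (k - 1), by
          have h1 := Nat.min_le_right (k1 k - 1) (k - 1); omega⟩
      let z := (Φ φt jsel).1
      let Z' := insert z s.Z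
      { Z := Z'
        pi := fun i j =>
          if (i = φt ∧ j.val < k1 k) ∨ (Φ i j).1 ∈ Z' ∨
             (i ∈ Uset Φ Z' ∧ pi0 Φ i j = Sum.inl true)
          then Sum.inr (Φ i j) else s.pi i j
        lastPhi := some φt
        lastZ := some z
        stopped := false }
    else { s with stopped := true, lastPhi := none, lastZ := none }
  else { s with stopped := true, lastPhi := none, lastZ := none }

/-- The Phase-1 process: state after `t` steps. -/
noncomputable def p1 (Φ : Formula n m k) : ℕ → P1State n m k
  | 0 => ⟨∅, pi0 Φ, none, none, false⟩
  | t + 1 => p1step Φ (p1 Φ t)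

/-- The stopping time `T` of the Phase-1 process. -/
noncomputable def TT (Φ : Formula n m k) : ℕ := sInf {t | (p1 Φ (t + 1)).stopped = true}

/-- The set `Z = Z_T` produced by Phase 1. -/
noncomputable def ZT (Φ : Formula n m k) : Finset (Fin n) := (p1 Φ (TT Φ)).Z

/-- The set `𝒰_t`: clauses with a positive literal, but such that at time `t` no
position shows `π_t(i,j) = 1` nor a negative literal with variable in `Z_t`. -/
noncomputable def curlyU (Φ : Formula n m k) (t : ℕ) : Finset (Fin m) :=
  Finset.univ.filter (fun i =>
    (∃ j, pi0 Φ i j ≠ Sum.inl false) ∧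
    ¬ ∃ j, (p1 Φ t).pi i j = Sum.inl true ∨
      ∃ x ∈ (p1 Φ t).Z, (p1 Φ t).pi i j = Sum.inr (x, false))

/-- The map `ψ_t : 𝒰_t → V` (junk value outside `𝒰_t`). -/
noncomputable def psi (hn : 0 < n) (Φ : Formula n m k) (t : ℕ) (i : Fin m) : Fin n :=
  let s := sInf {s | i ∈ curlyU Φ s}
  if h : (Finset.univ.filter
      (fun j : Fin k => (Φ i j).2 = true ∧ (Φ i j).1 ∉ (p1 Φ s).Z)).Nonempty then
    (Φ i ((Finset.univ.filter
      (fun j : Fin k => (Φ i j).2 = true ∧ (Φ i j).1 ∉ (p1 Φ s).Z)).min' h)).1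
  else ((p1 Φ s).lastZ).getD ⟨0, hn⟩

/-- Clause `i` is `(Z,Z')`-endangered. -/
def endangered (Φ : Formula n m k) (Z Z' : Finset (Fin n)) (i : Fin m) : Prop :=
  ¬ ∃ j, litTrue (sigmaZ Z) (Φ i j) ∧ (Φ i j).1 ∉ Z'

/-- A variable is `(Z,Z')`-unsafe. -/
def unsafeVar (Φ : Formula n m k) (Z Z' : Finset (Fin n)) (x : Fin n) : Prop :=
  x ∈ Z ∪ Z' ∨ ∃ i l, Φ i l = (x, true) ∧ ∀ j, j ≠ l →
    (((Φ i j).2 = true ∧ (Φ i j).1 ∈ Z ∪ Z') ∨ ((Φ i j).2 = false ∧ (Φ i j).1 ∉ Z))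

/-- The Phase-2 while-loop with fuel. -/
noncomputable def p2go (Φ : Formula n m k) (Z : Finset (Fin n)) :
    ℕ → Finset (Fin n) → Finset (Fin n)
  | 0, Z' => Z'
  | f + 1, Z' =>
    let Q := Finset.univ.filter (fun i : Fin m =>
      endangered Φ Z Z' i ∧
        (Finset.univ.filter (fun j => (Φ i j).1 ∈ Z')).card < 3)
    if hQ : Q.Nonempty then
      let i := Q.min' hQ
      let Ssafe := Finset.univ.filter (fun j : Fin k =>
        k1 k ≤ j.val ∧ j.val + 6 ≤ k ∧ ¬ unsafeVar Φ Z Z' ((Φ i j).1))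
      let S := if 3 ≤ Ssafe.card then Ssafe
        else Finset.univ.filter (fun j : Fin k => k ≤ j.val + 5 ∧ (Φ i j).1 ∉ Z')
      p2go Φ Z f (Z' ∪ (((S.sort (· ≤ ·)).take 3).map (fun j => (Φ i j).1)).toFinset)
    else Z'

/-- The set `Z'` produced by Phase 2. -/
noncomputable def p2 (Φ : Formula n m k) : Finset (Fin n) := p2go Φ (ZT Φ) m ∅

/-- `f` is a matching in the bipartite graph `G(Φ,Z,Z')` covering all
`(Z,Z')`-endangered clauses: it assigns to each endangered clause a variable of `Z'`
occurring in it, injectively on endangered clauses. -/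
def coversEndangered (Φ : Formula n m k) (Z Z' : Finset (Fin n)) (f : Fin m → Fin n) : Prop :=
  (∀ i, endangered Φ Z Z' i → f i ∈ Z' ∧ ∃ j, (Φ i j).1 = f i) ∧
  ∀ i i', endangered Φ Z Z' i → endangered Φ Z Z' i' → f i = f i' → i = i'

/-- The output of the algorithm `Fix` (Phase 3): the assignment `σ_{Z,Z',M}` if a
matching `M` covering all `(Z,Z')`-endangered clauses exists, `none` ("fail") otherwise. -/
noncomputable def fixOutput (Φ : Formula n m k) : Option (Fin n → Bool) :=
  if h : ∃ f : Fin m → Fin n, coversEndangered Φ (ZT Φ) (p2 Φ) f then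
    some (fun x =>
      if x ∈ ZT Φ ∧ x ∉ p2 Φ then false
      else if ∃ i, endangered Φ (ZT Φ) (p2 Φ) i ∧ Classical.choose h i = x ∧
          ∃ j, Φ i j = (x, false) then false
      else true)
  else none

/-- The `σ`-algebra `F_t` generated by the equivalence classes of `≡_t`. -/
noncomputable def Ft (n m k : ℕ) (t : ℕ) : MeasurableSpace (Formula n m k) :=
  MeasurableSpace.comap (fun Φ : Formula n m k => fun s : Fin (t + 1) => (p1 Φ s.val).pi) ⊤

/-- The `≡_t`-equivalence class of `Φ`. -/
noncomputable def cls (t : ℕ) (Φ : Formula n m k) : Finset (Formula n m k) :=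
  Finset.univ.filter (fun Ψ => ∀ s ≤ t, (p1 Ψ s).pi = (p1 Φ s).pi)

/-- The set `E_t` of positions whose literal is not yet revealed at time `t`. -/
noncomputable def Et (Φ : Formula n m k) (t : ℕ) : Finset (Fin m × Fin k) :=
  Finset.univ.filter (fun p => ∃ b, (p1 Φ t).pi p.1 p.2 = Sum.inl b)

/-- `ω = (1-ε) ln k`. -/
noncomputable def omOf (ε : ℝ) (k : ℕ) : ℝ := (1 - ε) * Real.log k

/-- `m = ⌊(1-ε) 2^k k⁻¹ (ln k) n⌋`. -/
noncomputable def mOf (ε : ℝ) (k n : ℕ) : ℕ := ⌊(1 - ε) * 2 ^ k * Real.log k / k * n⌋₊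

/-- `θ = ⌊4 n k⁻¹ ln ω⌋`. -/
noncomputable def thetaOf (ε : ℝ) (k n : ℕ) : ℕ := ⌊4 * (n : ℝ) / k * Real.log (omOf ε k)⌋₊

/-- The indicator random variable `B_t` of Corollary 9. -/
noncomputable def Bt (ε : ℝ) (n m k : ℕ) (t : ℕ) : Formula n m k → ℝ := fun Φ =>
  if t ≤ TT Φ ∧
      (∃ i, (p1 Φ t).lastPhi = some i ∧
        ∀ j : Fin k, j.val + 1 < k1 k → 0 < Ux Φ (p1 Φ (t - 1)).Z ((Φ i j).1)) ∧
      ((n : ℝ) * (k : ℝ) ^ (ε / 2 - 1) ≤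
        ((Finset.univ.filter (fun x : Fin n =>
          x ∉ (p1 Φ (t - 1)).Z ∧ Ux Φ (p1 Φ (t - 1)).Z x = 0)).card : ℝ)) ∧
      (((Uset Φ (p1 Φ t).Z).card : ℝ) ≤ (1 + ε / 3) * omOf ε k * n)
  then 1 else 0

/-- The indicator `H_{tij}`. -/
noncomputable def Hind (n m k : ℕ) (t : ℕ) (i : Fin m) (j : Fin k) : Formula n m k → ℝ :=
  fun Φ =>
  if (p1 Φ (t - 1)).pi i j = Sum.inl true ∧
      ∃ z, (p1 Φ t).lastZ = some z ∧ (p1 Φ t).pi i j = Sum.inr (z, true)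
  then 1 else 0

/-- The indicator `S_{tij}`. -/
noncomputable def Sind (n m k : ℕ) (t : ℕ) (i : Fin m) (j : Fin k) : Formula n m k → ℝ :=
  fun Φ => if t ≤ TT Φ ∧ ∃ b, (p1 Φ t).pi i j = Sum.inl b then 1 else 0

/-!
Every clause of `𝒰_t` has a positive literal and at most one literal true under `σ_{Z_t}`, which is
then positive: Phase 1 reveals a positive literal outside `Z_t` only in a `Z_t`-unique clause, and
it reveals every occurrence of a variable of `Z_t`. For a fixed `Z`, the number of clauses of this
shape is a sum of `m` independent indicators of probability at most `k 2^{-k}`, so its mean is at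
most `ωn`. An exponential moment with base `1 + ε/6` bounds the probability that it exceeds
`(1 + ε/3)ωn` by `2^{-n} e^{-n}`, and a union bound over the `2^n` sets `Z` finishes the proof.
-/

section Phase1

variable (Φ : Formula n m k)

lemma p1step_cases (s : P1State n m k) :
    ((p1step Φ s).Z = s.Z ∧ (p1step Φ s).pi = s.pi) ∨
    ∃ φt z, allNeg Φ φt ∧ (p1step Φ s).Z = insert z s.Z ∧
      ∀ i j, (p1step Φ s).pi i j =
        if (i = φt ∧ j.val < k1 k) ∨ (Φ i j).1 ∈ insert z s.Z ∨
           (i ∈ Uset Φ (insert z s.Z) ∧ pi0 Φ i j = Sum.inl true)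
        then Sum.inr (Φ i j) else s.pi i j := by
  unfold p1step
  dsimp only
  split_ifs <;> first
    | exact Or.inl ⟨rfl, rfl⟩
    | exact Or.inr ⟨_, _, (mem_filter.mp
        (min'_mem {i | allNeg Φ i ∧ ∀ j, (Φ i j).1 ∉ s.Z} ‹_›)).2.1, rfl, fun _ _ => rfl⟩

lemma p1_pi_eq_pi0_or_eq (t : ℕ) (i : Fin m) (j : Fin k) :
    (p1 Φ t).pi i j = pi0 Φ i j ∨ (p1 Φ t).pi i j = Sum.inr (Φ i j) := by
  induction t with
  | zero => exact Or.inl rfl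
  | succ t ih =>
    rcases p1step_cases Φ (p1 Φ t) with ⟨-, hpi⟩ | ⟨φt, z, -, -, hpi⟩
    · rw [p1, hpi]; exact ih
    · rw [p1, hpi i j]
      split_ifs
      exacts [Or.inr rfl, ih]

lemma p1_pi_eq_of_mem_Z {t : ℕ} {i : Fin m} {j : Fin k} (h : (Φ i j).1 ∈ (p1 Φ t).Z) :
    (p1 Φ t).pi i j = Sum.inr (Φ i j) := by
  induction t with
  | zero => simp [p1] at h
  | succ t ih =>
    rcases p1step_cases Φ (p1 Φ t) with ⟨hZ, hpi⟩ | ⟨φt, z, -, hZ, hpi⟩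
    · rw [p1, hZ] at h
      rw [p1, hpi]; exact ih h
    · rw [p1, hZ] at h
      rw [p1, hpi i j, if_pos (Or.inr (Or.inl h))]

lemma card_le_one_of_mem_Uset {Z : Finset (Fin n)} {i : Fin m} (hi : i ∈ Uset Φ Z)
    {s : Finset (Fin k)} (hs : ∀ j ∈ s, (Φ i j).2 = true ∧ (Φ i j).1 ∉ Z) : #s ≤ 1 :=
  (card_le_card fun j hj => mem_filter.mpr ⟨mem_univ j, hs j hj⟩).trans (mem_filter.mp hi).2.1.le

lemma card_revealed_pos_notMem_le_one (t : ℕ) (i : Fin m) :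
    #{j | (p1 Φ t).pi i j = Sum.inr (Φ i j) ∧ (Φ i j).2 = true ∧ (Φ i j).1 ∉ (p1 Φ t).Z} ≤ 1 := by
  induction t with
  | zero =>
    by_cases hU : i ∈ Uset Φ ∅
    · exact card_le_one_of_mem_Uset Φ hU fun j hj => (mem_filter.mp hj).2.2
    · simp [p1, pi0, hU]
  | succ t ih =>
    rcases p1step_cases Φ (p1 Φ t) with ⟨hZ, hpi⟩ | ⟨φt, z, hneg, hZ, hpi⟩
    · simpa only [p1, hZ, hpi] using ih
    by_cases hU : i ∈ Uset Φ (insert z (p1 Φ t).Z)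
    · rw [p1, hZ]
      exact card_le_one_of_mem_Uset Φ hU fun j hj => (mem_filter.mp hj).2.2
    refine (card_le_card fun j hj => ?_).trans ih
    simp only [p1, hZ, hpi, mem_filter, mem_univ, true_and, mem_insert, not_or] at hj ⊢
    obtain ⟨hrev, hpos, hz, hout⟩ := hj
    rw [if_neg] at hrev
    · exact ⟨hrev, hpos, hout⟩
    rintro (⟨rfl, -⟩ | hin | hu)
    · simp [hneg j] at hpos
    · exact hin.elim hz hout
    · exact hU hu.1

end Phase1

def AlmostUnique (Z : Finset (Fin n)) (c : Fin k → Lit n) : Prop :=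
  (∃ j, (c j).2 = true) ∧
  #{j | (c j).2 = true ∧ (c j).1 ∉ Z} ≤ 1 ∧
  ∀ j, (c j).2 = false → (c j).1 ∉ Z

lemma almostUnique_of_mem_curlyU {Φ : Formula n m k} {t : ℕ} {i : Fin m}
    (hi : i ∈ curlyU Φ t) : AlmostUnique (p1 Φ t).Z (Φ i) := by
  simp only [curlyU, mem_filter, mem_univ, true_and, not_exists, not_or] at hi
  obtain ⟨⟨j₀, hj₀⟩, hnot⟩ := hi
  have hrev : ∀ j, (Φ i j).2 = true → (p1 Φ t).pi i j = Sum.inr (Φ i j) := by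
    intro j hpos
    rcases p1_pi_eq_pi0_or_eq Φ t i j with h | h
    · by_cases hU : i ∈ Uset Φ ∅
      · exact h.trans (by simp [pi0, hU, hpos])
      · exact absurd (h.trans (by simp [pi0, hU, hpos])) (hnot j).1
    · exact h
  refine ⟨⟨j₀, ?_⟩, ?_, fun j hneg hZ => ?_⟩
  · by_contra h
    exact hj₀ (by simp [pi0, Bool.not_eq_true _ ▸ h])
  · exact (card_le_card fun j hj => by
      simp only [mem_filter, mem_univ, true_and] at hj ⊢
      exact ⟨hrev j hj.1, hj⟩).trans (card_revealed_pos_notMem_le_one Φ t i)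
  · exact (hnot j).2 _ ⟨hZ, by rw [p1_pi_eq_of_mem_Z Φ hZ, ← hneg]⟩

lemma curlyU_subset_filter_almostUnique (Φ : Formula n m k) (t : ℕ) :
    curlyU Φ t ⊆ ({i | AlmostUnique (p1 Φ t).Z (Φ i)} : Finset (Fin m)) :=
  fun _ hi => mem_filter.mpr ⟨mem_univ _, almostUnique_of_mem_curlyU hi⟩

lemma card_filter_snd_eq (f : Fin n → Bool) : #{l : Lit n | l.2 = f l.1} = n := by
  have : ({l : Lit n | l.2 = f l.1} : Finset (Lit n)) = univ.image fun x => (x, f x) := by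
    ext ⟨x, b⟩
    simp [eq_comm]
  rw [this, card_image_of_injective _ fun _ _ h => congrArg Prod.fst h, card_fin]

lemma AlmostUnique.exists_pos_forall_ne {Z : Finset (Fin n)} {c : Fin k → Lit n}
    (h : AlmostUnique Z c) :
    ∃ j, (c j).2 = true ∧ ∀ j' ≠ j, (c j').2 = decide ((c j').1 ∈ Z) := by
  obtain ⟨⟨j₀, hj₀⟩, hcard, hneg⟩ := h
  have hrest : ∀ j, (c j).2 = true ∧ (c j).1 ∉ Z →
      ∀ j' ≠ j, (c j').2 = decide ((c j').1 ∈ Z) := by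
    intro j hj j' hj'
    cases hs : (c j').2
    · simp [hneg j' hs]
    · by_contra hZ
      refine hj' (card_le_one.mp hcard j' ?_ j ?_) <;> simp_all
  by_cases hfree : ∃ j, (c j).2 = true ∧ (c j).1 ∉ Z
  · obtain ⟨j, hj⟩ := hfree
    exact ⟨j, hj.1, hrest j hj⟩
  · refine ⟨j₀, hj₀, fun j' _ => ?_⟩
    cases hs : (c j').2
    · simp [hneg j' hs]
    · simp_all

/-- Each literal is false under `σ_Z` with probability `1/2`, so a uniformly random clause is
almost unique with probability at most `k 2^{-k}`. -/
lemma card_almostUnique_le (Z : Finset (Fin n)) :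
    #{c : Fin k → Lit n | AlmostUnique Z c} ≤ k * n ^ k := by
  let S : Fin k → Fin k → Finset (Lit n) := fun j j' =>
    if j' = j then ({l | l.2 = true} : Finset (Lit n))
    else ({l | l.2 = decide (l.1 ∈ Z)} : Finset (Lit n))
  have hS : ∀ j j', #(S j j') = n := fun j j' => by
    unfold S; split_ifs
    exacts [card_filter_snd_eq fun _ => true, card_filter_snd_eq fun x => decide (x ∈ Z)]
  calc #{c : Fin k → Lit n | AlmostUnique Z c}
      ≤ #(univ.biUnion fun j => Fintype.piFinset (S j)) := by
        refine card_le_card fun c hc => ?_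
        obtain ⟨j, hpos, hrest⟩ := (mem_filter.mp hc).2.exists_pos_forall_ne
        refine mem_biUnion.mpr ⟨j, mem_univ j, Fintype.mem_piFinset.mpr fun j' => ?_⟩
        unfold S; split_ifs with h
        · simp [h, hpos]
        · simp [hrest j' h]
    _ ≤ ∑ j, #(Fintype.piFinset (S j)) := card_biUnion_le
    _ = k * n ^ k := by simp [Fintype.card_piFinset, hS]

lemma sum_ite_eq_card_add {α : Type*} [Fintype α] (p : α → Prop) (lam : ℝ) :
    ∑ a, (if p a then lam else 1) = Fintype.card α + (lam - 1) * #{a | p a} := by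
  have h : ∀ a, (if p a then lam else 1) = 1 + (lam - 1) * (if p a then 1 else 0) := fun a => by
    split_ifs <;> ring
  simp only [h, sum_add_distrib, ← mul_sum, natCast_card_filter, sum_const, card_univ,
    nsmul_eq_mul, mul_one]

/-- Markov's inequality for `lam ^ X`, where `X` counts the independent coordinates of a uniform
`Φ : Fin m → α` that satisfy `p`. -/
lemma card_lt_card_filter_mul_rpow_le {α : Type*} [Fintype α] (p : α → Prop) (m : ℕ)
    {lam : ℝ} (hlam : 1 ≤ lam) (B : ℝ) :
    (#{Φ : Fin m → α | B < #{i | p (Φ i)}} : ℝ) * lam ^ B ≤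
      (Fintype.card α + (lam - 1) * #{a | p a}) ^ m := by
  have hmoment : ∑ Φ : Fin m → α, lam ^ #{i | p (Φ i)} =
      (Fintype.card α + (lam - 1) * #{a | p a}) ^ m := by
    rw [← sum_ite_eq_card_add, Fintype.sum_pow]
    refine sum_congr rfl fun Φ _ => ?_
    rw [card_filter, ← prod_pow_eq_pow_sum]
    exact prod_congr rfl fun i _ => by split_ifs <;> simp
  calc (#{Φ : Fin m → α | B < #{i | p (Φ i)}} : ℝ) * lam ^ B
      = ∑ Φ : Fin m → α with B < #{i | p (Φ i)}, lam ^ B := by rw [sum_const, nsmul_eq_mul]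
    _ ≤ ∑ Φ : Fin m → α with B < #{i | p (Φ i)}, lam ^ #{i | p (Φ i)} :=
        sum_le_sum fun Φ hΦ => by
          rw [← Real.rpow_natCast]
          exact Real.rpow_le_rpow_of_exponent_le hlam (mem_filter.mp hΦ).2.le
    _ ≤ ∑ Φ : Fin m → α, lam ^ #{i | p (Φ i)} :=
        sum_le_sum_of_subset_of_nonneg (filter_subset _ _) fun _ _ _ => by positivity
    _ = _ := hmoment

open Real in
lemma two_pow_mul_one_add_pow_le {ε ω x : ℝ} {n m : ℕ} (hε0 : 0 < ε) (hε1 : ε < 1 / 10)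
    (hω : 74 ≤ ω * ε ^ 2) (hx : 0 ≤ x) (hm : m * x ≤ ω * n) :
    2 ^ n * (1 + ε / 6 * x) ^ m ≤ (1 + ε / 6) ^ ((1 + ε / 3) * ω * n) * exp (-n) := by
  have hω0 : 0 ≤ ω := by nlinarith
  have hpow : (1 + ε / 6 * x) ^ m ≤ exp (ε / 6 * (ω * n)) :=
    calc (1 + ε / 6 * x) ^ m ≤ exp (ε / 6 * x) ^ m := by
          gcongr
          linarith [add_one_le_exp (ε / 6 * x)]
      _ = exp (ε / 6 * (m * x)) := by rw [← exp_nat_mul]; ring_nf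
      _ ≤ exp (ε / 6 * (ω * n)) := by gcongr
  have hlog : ε / (6 + ε) ≤ log (1 + ε / 6) := by
    convert one_sub_inv_le_log_of_pos (by positivity : (0 : ℝ) < 1 + ε / 6) using 1
    field_simp
    ring
  -- per unit of `ωn` the exponent gains `ε² / (6 (6 + ε)) ≥ ε² / 37`, and `ωε² / 37 ≥ 2`
  -- pays for the factor `2^n e^n`
  have hgain : ε ^ 2 / 37 ≤ (1 + ε / 3) * (ε / (6 + ε)) - ε / 6 := by
    field_simp
    nlinarith
  have hexp : n * log 2 + ε / 6 * (ω * n) ≤ (1 + ε / 3) * ω * n * log (1 + ε / 6) - n := by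
    have hlog2 := log_two_lt_d9
    have h1 : (1 + ε / 3) * (ε / (6 + ε)) * (ω * n) ≤ (1 + ε / 3) * ω * n * log (1 + ε / 6) := by
      have := mul_le_mul_of_nonneg_left hlog (by positivity : 0 ≤ (1 + ε / 3) * ω * n)
      linarith
    nlinarith [mul_le_mul_of_nonneg_right hgain (by positivity : 0 ≤ ω * n)]
  calc 2 ^ n * (1 + ε / 6 * x) ^ m ≤ exp (n * log 2) * exp (ε / 6 * (ω * n)) := by
        rw [exp_nat_mul, exp_log two_pos]
        gcongr
    _ ≤ exp ((1 + ε / 3) * ω * n * log (1 + ε / 6) - n) := by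
        rw [← exp_add]
        exact exp_le_exp.mpr hexp
    _ = (1 + ε / 6) ^ ((1 + ε / 3) * ω * n) * exp (-n) := by
        rw [rpow_def_of_pos (by positivity), ← exp_add]
        ring_nf

lemma card_formula : (Fintype.card (Formula n m k) : ℝ) = ((2 * n) ^ k) ^ m := by
  simp [Formula, mul_comm]

lemma card_exists_lt_card_almostUnique_le {ε ω : ℝ} (hε0 : 0 < ε) (hε1 : ε < 1 / 10)
    (hω : 74 ≤ ω * ε ^ 2) (hm : m * (k / 2 ^ k : ℝ) ≤ ω * n) :
    (#{Φ : Formula n m k | ∃ Z : Finset (Fin n),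
        (1 + ε / 3) * ω * n < #{i | AlmostUnique Z (Φ i)}} : ℝ) ≤
      Fintype.card (Formula n m k) * Real.exp (-n) := by
  set lam : ℝ := 1 + ε / 6
  set B : ℝ := (1 + ε / 3) * ω * n
  have hlam : 1 ≤ lam := le_add_of_nonneg_right (by positivity)
  have hfixed : ∀ Z : Finset (Fin n), (#{Φ : Formula n m k | B < #{i | AlmostUnique Z (Φ i)}} : ℝ) *
      lam ^ B ≤ ((2 * n) ^ k) ^ m * (1 + ε / 6 * (k / 2 ^ k)) ^ m := by
    intro Z
    refine (card_lt_card_filter_mul_rpow_le (AlmostUnique Z) m hlam B).trans ?_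
    rw [← mul_pow]
    gcongr
    have hAU : (#{c : Fin k → Lit n | AlmostUnique Z c} : ℝ) ≤ k * n ^ k := by
      exact_mod_cast card_almostUnique_le Z
    calc (Fintype.card (Fin k → Lit n) : ℝ) + (lam - 1) * #{c | AlmostUnique Z c}
        ≤ (2 * n) ^ k + ε / 6 * (k * n ^ k) := by
          simp only [lam, add_sub_cancel_left]
          gcongr
          simp [mul_comm]
      _ = (2 * n) ^ k * (1 + ε / 6 * (k / 2 ^ k)) := by
          field_simp
          ring
  have hunion : (#{Φ : Formula n m k | ∃ Z : Finset (Fin n), B < #{i | AlmostUnique Z (Φ i)}} : ℝ)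
      ≤ ∑ Z : Finset (Fin n), (#{Φ : Formula n m k | B < #{i | AlmostUnique Z (Φ i)}} : ℝ) := by
    have : ({Φ : Formula n m k | ∃ Z : Finset (Fin n), B < #{i | AlmostUnique Z (Φ i)}} :
        Finset (Formula n m k)) =
        univ.biUnion fun Z => {Φ : Formula n m k | B < #{i | AlmostUnique Z (Φ i)}} := by
      ext Φ; simp
    rw [this]
    exact_mod_cast card_biUnion_le
  have hlamB : 0 < lam ^ B := Real.rpow_pos_of_pos (by positivity) B
  refine le_of_mul_le_mul_right ?_ hlamB
  calc _ ≤ ∑ Z : Finset (Fin n),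
        (#{Φ : Formula n m k | B < #{i | AlmostUnique Z (Φ i)}} : ℝ) * lam ^ B := by
        rw [← sum_mul]
        exact mul_le_mul_of_nonneg_right hunion hlamB.le
    _ ≤ ∑ Z : Finset (Fin n), ((2 * n) ^ k) ^ m * (1 + ε / 6 * (k / 2 ^ k)) ^ m :=
        sum_le_sum fun Z _ => hfixed Z
    _ = ((2 * n) ^ k) ^ m * (2 ^ n * (1 + ε / 6 * (k / 2 ^ k)) ^ m) := by
        simp only [sum_const, card_univ, Fintype.card_finset, Fintype.card_fin, nsmul_eq_mul,
          Nat.cast_pow, Nat.cast_ofNat]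
        ring
    _ ≤ ((2 * n) ^ k) ^ m * (lam ^ B * Real.exp (-n)) := by
        exact mul_le_mul_of_nonneg_left
          (two_pow_mul_one_add_pow_le hε0 hε1 hω (by positivity) hm) (by positivity)
    _ = _ := by rw [card_formula]; ring

lemma mOf_mul_le {ε : ℝ} (hε : ε ≤ 1) (k n : ℕ) :
    mOf ε k n * (k / 2 ^ k : ℝ) ≤ omOf ε k * n := by
  rcases k.eq_zero_or_pos with rfl | hk
  · simp [omOf]
  have hm : (mOf ε k n : ℝ) ≤ (1 - ε) * 2 ^ k * Real.log k / k * n :=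
    Nat.floor_le (by
      have := Real.log_natCast_nonneg k
      have : 0 ≤ 1 - ε := by linarith
      positivity)
  calc mOf ε k n * (k / 2 ^ k : ℝ) ≤ (1 - ε) * 2 ^ k * Real.log k / k * n * (k / 2 ^ k) := by
        gcongr
    _ = omOf ε k * n := by
        rw [omOf]
        field_simp

lemma le_omOf_mul_sq {ε : ℝ} (hε0 : 0 < ε) (hε1 : ε < 1 / 10) {k : ℕ}
    (hk : ⌈Real.exp (84 / ε ^ 2)⌉₊ ≤ k) : 74 ≤ omOf ε k * ε ^ 2 := by
  have hexp : Real.exp (84 / ε ^ 2) ≤ k := (Nat.le_ceil _).trans (by exact_mod_cast hk)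
  have hlog : 84 / ε ^ 2 ≤ Real.log k :=
    (Real.le_log_iff_exp_le ((Real.exp_pos _).trans_le hexp)).mpr hexp
  have : 84 ≤ Real.log k * ε ^ 2 := (div_le_iff₀ (by positivity)).mp hlog
  rw [omOf]
  nlinarith

lemma Pr_le_one (A : Set (Formula n m k)) : Pr n m k A ≤ 1 :=
  div_le_one_of_le₀ (by exact_mod_cast card_le_card (filter_subset _ _)) (by positivity)

lemma one_sub_le_Pr (hn : 0 < n) {A : Set (Formula n m k)} {δ : ℝ}
    (h : (#{Φ : Formula n m k | Φ ∉ A} : ℝ) ≤ Fintype.card (Formula n m k) * δ) :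
    1 - δ ≤ Pr n m k A := by
  have hpos : (0 : ℝ) < Fintype.card (Formula n m k) := by
    have : Nonempty (Formula n m k) := ⟨fun _ _ => (⟨0, hn⟩, true)⟩
    exact_mod_cast Fintype.card_pos
  have hsplit : (#{Φ : Formula n m k | Φ ∈ A} : ℝ) + #{Φ : Formula n m k | Φ ∉ A} =
      Fintype.card (Formula n m k) := by
    exact_mod_cast card_filter_add_card_filter_not (fun Φ => Φ ∈ A)
  rw [Pr, card_univ, le_div_iff₀ hpos]
  linarith

/-- Lemma 8.  Whp `max_{0≤t≤T} |𝒰_t| ≤ (1+ε/3)ωn`. -/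
theorem statement12 (ε : ℝ) (hε0 : 0 < ε) (hε1 : ε < 0.1) :
    ∃ k₀ : ℕ, ∀ k : ℕ, k₀ ≤ k →
    Tendsto (fun n : ℕ => Pr n (mOf ε k n) k {Φ : Formula n (mOf ε k n) k |
      ∀ t : ℕ, t ≤ TT Φ →
        ((curlyU Φ t).card : ℝ) ≤ (1 + ε / 3) * omOf ε k * n}) atTop (nhds 1) := by
  have hε1' : ε < 1 / 10 := by norm_num at hε1 ⊢; linarith
  refine ⟨⌈Real.exp (84 / ε ^ 2)⌉₊, fun k hk => ?_⟩
  have hlower : ∀ n : ℕ, 0 < n → 1 - Real.exp (-n) ≤ Pr n (mOf ε k n) k {Φ : Formula n (mOf ε k n) k |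
      ∀ t : ℕ, t ≤ TT Φ → ((curlyU Φ t).card : ℝ) ≤ (1 + ε / 3) * omOf ε k * n} := by
    refine fun n hn => one_sub_le_Pr hn ((Nat.cast_le.mpr (card_le_card fun Φ hΦ => ?_)).trans
      (card_exists_lt_card_almostUnique_le hε0 hε1' (le_omOf_mul_sq hε0 hε1' hk)
        (mOf_mul_le (by linarith) k n)))
    simp only [mem_filter, mem_univ, true_and, Set.mem_ofPred_eq, not_forall, not_le] at hΦ ⊢
    obtain ⟨t, -, ht⟩ := hΦ
    have hsub := card_le_card (curlyU_subset_filter_almostUnique Φ t)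
    exact ⟨(p1 Φ t).Z, ht.trans_le (by exact_mod_cast hsub)⟩
  have hlim : Tendsto (fun n : ℕ => 1 - Real.exp (-n)) atTop (nhds 1) := by
    have := (Real.tendsto_exp_neg_atTop_nhds_zero.comp tendsto_natCast_atTop_atTop).const_sub 1
    simpa using this
  exact tendsto_of_tendsto_of_tendsto_of_le_of_le' hlim tendsto_const_nhds
    (eventually_atTop.mpr ⟨1, hlower⟩) (Eventually.of_forall fun n => Pr_le_one _)

end RandomKSAT
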